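/- Let S be a semigroup that is a finite disjoint union of free monogenic subsemigroups N_a = ⟨a⟩ (a ∈ A), with ρ the right congruence (x,y) ∈ ρ iff their right translates by any element of S¹ always lie in a common block. For each a, write ρ restricted to N_a as: (a^i, a^j) ∈ ρ iff i = j or (i, j ≥ p_a and i ≡ j mod q_a). For (x, y) ∈ ρ with x = a^i, y = a^j, define d(x,y) = |i − j| / q_a. Then for all x, y, z ∈ S with (x,y) ∈ ρ and x ≠ y, d(x,y) divides d(x·z, y·z). -/
import Mathlib


/-- `spow a n` is the `n`-th power of `a` in a semigroup, for `n ≥ 1`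
(with the junk value `a` at `n = 0`). -/
def spow {S : Type*} [Semigroup S] (a : S) : ℕ → S
  | 0 => a
  | 1 => a
  | (n + 2) => spow a (n + 1) * a

/-- The subsemigroup (as a set) generated by `a`: all positive powers of `a`. -/
def Nblock {S : Type*} [Semigroup S] (a : S) : Set S :=
  {x | ∃ i : ℕ, 1 ≤ i ∧ x = spow a i}

/-- The relation ρ: `x ρ y` iff for every `z` in `S¹` (here `WithOne S`, i.e. `S` with an
identity adjoined) there is a block `N_a` containing both `x·z` and `y·z`. -/
def rho {S : Type*} [Semigroup S] {A : Type*} (gen : A → S) (x y : S) : Prop :=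
  ∀ z : WithOne S, ∃ a : A,
    (↑x * z) ∈ ((fun s : S => (s : WithOne S)) '' Nblock (gen a)) ∧
    (↑y * z) ∈ ((fun s : S => (s : WithOne S)) '' Nblock (gen a))

lemma spow_succ' {S : Type*} [Semigroup S] (a : S) {n : ℕ} (hn : 1 ≤ n) :
    spow a (n + 1) = spow a n * a := by
  obtain ⟨m, rfl⟩ : ∃ m, n = m + 1 := ⟨n - 1, by omega⟩
  rfl

lemma spow_add {S : Type*} [Semigroup S] (a : S) (i : ℕ) :
    ∀ j : ℕ, 1 ≤ i → 1 ≤ j → spow a (i + j) = spow a i * spow a j := by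
  intro j
  induction j with
  | zero => intro _ h; omega
  | succ m ih =>
    intro hi _
    rcases Nat.eq_zero_or_pos m with rfl | hm
    · show spow a (i + 1) = spow a i * spow a 1
      have h1 : spow a 1 = a := rfl
      rw [h1, ← spow_succ' a hi]
    · have h1 : i + (m + 1) = (i + m) + 1 := by omega
      rw [h1, spow_succ' a (by omega), ih hi hm, mul_assoc, ← spow_succ' a hm]

lemma spow_comm {S : Type*} [Semigroup S] (a : S) {i j : ℕ} (hi : 1 ≤ i) (hj : 1 ≤ j) :
    spow a i * spow a j = spow a j * spow a i := by
  rw [← spow_add a i j hi hj, ← spow_add a j i hj hi, Nat.add_comm]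

lemma rho_mul_right {S : Type*} [Semigroup S] {A : Type*} (gen : A → S)
    {x y : S} (h : rho gen x y) (z : S) : rho gen (x * z) (y * z) := by
  intro w
  obtain ⟨c, h1, h2⟩ := h (↑z * w)
  refine ⟨c, ?_, ?_⟩ <;> rw [WithOne.coe_mul, mul_assoc] <;> assumption

lemma rho_block {S : Type*} [Semigroup S] {A : Type*} (gen : A → S)
    (hfree : ∀ (a b : A) (i j : ℕ), 1 ≤ i → 1 ≤ j →
      spow (gen a) i = spow (gen b) j → a = b ∧ i = j)
    {x y : S} (h : rho gen x y) {z : S} {b : A} {u : ℕ} (hu : 1 ≤ u)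
    (hx : x * z = spow (gen b) u) : ∃ t, 1 ≤ t ∧ y * z = spow (gen b) t := by
  obtain ⟨c, hc1, hc2⟩ := h (↑z)
  obtain ⟨s, hs, hseq⟩ := hc1
  obtain ⟨r, hr, hreq⟩ := hc2
  rw [← WithOne.coe_mul] at hseq hreq
  replace hseq : s = x * z := WithOne.coe_inj.mp hseq
  replace hreq : r = y * z := WithOne.coe_inj.mp hreq
  obtain ⟨t', ht', hst⟩ := hs
  obtain ⟨t, ht, hrt⟩ := hr
  have hbc : b = c := by
    have heq : spow (gen b) u = spow (gen c) t' := by rw [← hx, ← hseq, hst]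
    exact (hfree b c u t' hu ht' heq).1
  exact ⟨t, ht, by rw [← hreq, hrt, hbc]⟩

lemma dvd_dist_of_mod {q u v : ℕ} (h : u % q = v % q) : q ∣ Nat.dist u v := by
  rcases le_total u v with hle | hle
  · rw [Nat.dist_eq_sub_of_le hle]
    exact (Nat.modEq_iff_dvd' hle).mp h
  · rw [Nat.dist_comm, Nat.dist_eq_sub_of_le hle]
    exact (Nat.modEq_iff_dvd' hle).mp h.symm

lemma stmt15_aux {S : Type*} [Semigroup S] {A : Type*} (gen : A → S)
    (hfree : ∀ (a b : A) (i j : ℕ), 1 ≤ i → 1 ≤ j →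
      spow (gen a) i = spow (gen b) j → a = b ∧ i = j)
    (pa qa : A → ℕ) (hpa : ∀ a, 1 ≤ pa a) (hqa : ∀ a, 1 ≤ qa a)
    (hchar : ∀ (a : A) (i j : ℕ), 1 ≤ i → 1 ≤ j →
      (rho gen (spow (gen a) i) (spow (gen a) j) ↔
        i = j ∨ (pa a ≤ i ∧ pa a ≤ j ∧ i % qa a = j % qa a))) :
    ∀ (a b : A) (i j u v : ℕ) (z : S), 1 ≤ i → 1 ≤ j → 1 ≤ u → 1 ≤ v →
      rho gen (spow (gen a) i) (spow (gen a) j) → i < j →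
      spow (gen a) i * z = spow (gen b) u →
      spow (gen a) j * z = spow (gen b) v →
      (Nat.dist i j / qa a) ∣ (Nat.dist u v / qa b) := by
  intro a b i j u v z hi hj hu hv hrho hij hx hy
  set q := qa a with hq
  have hq1 : 1 ≤ q := hqa a
  have hchr := (hchar a i j hi hj).mp hrho
  rcases hchr with rfl | ⟨hpi, hpj, hmod⟩
  · omega
  -- j = i + k * q
  have hdvd : q ∣ j - i := (Nat.modEq_iff_dvd' hij.le).mp hmod
  obtain ⟨k, hk⟩ := hdvd
  have hk' : j - i = k * q := by rw [hk, Nat.mul_comm]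
  have hk1 : 1 ≤ k := by
    rcases Nat.eq_zero_or_pos k with rfl | h; · omega
    · exact h
  -- rho between a^i and a^(i+m*q) for every m
  have hrhom : ∀ m : ℕ, rho gen (spow (gen a) i) (spow (gen a) (i + m * q)) := by
    intro m
    refine (hchar a i (i + m * q) hi (by omega)).mpr ?_
    rcases Nat.eq_zero_or_pos m with rfl | hm
    · left; omega
    · right
      exact ⟨hpi, by omega, (Nat.add_mul_mod_self_right i m q).symm⟩
  have E : ∀ m : ℕ, ∃ t, 1 ≤ t ∧ spow (gen a) (i + m * q) * z = spow (gen b) t := by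
    intro m
    exact rho_block gen hfree (hrhom m) hu hx
  choose t ht1 ht2 using E
  -- key multiplicative identity
  have hstep : ∀ m : ℕ, spow (gen b) (t (m + 1)) = spow (gen a) q * spow (gen b) (t m) := by
    intro m
    have h1 : i + (m + 1) * q = q + (i + m * q) := by ring
    rw [← ht2 (m + 1), ← ht2 m, h1, spow_add (gen a) q (i + m * q) hq1 (by omega), mul_assoc]
  have hrec : ∀ m : ℕ, t (m + 1) + t 0 = t 1 + t m := by
    intro m
    have key : spow (gen b) (t (m + 1) + t 0) = spow (gen b) (t 1 + t m) := by
      rw [spow_add (gen b) _ _ (ht1 (m + 1)) (ht1 0),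
          spow_add (gen b) _ _ (ht1 1) (ht1 m), hstep m, hstep 0, mul_assoc,
          spow_comm (gen b) (ht1 m) (ht1 0), ← mul_assoc]
    exact (hfree b b _ _ (by have := ht1 (m+1); omega) (by have := ht1 1; omega) key).2
  have hlin : ∀ m : ℕ, t m + m * t 0 = t 0 + m * t 1 := by
    intro m
    induction m with
    | zero => simp
    | succ n ih =>
      have h1 := hrec n
      have h2 : (n + 1) * t 0 = n * t 0 + t 0 := by ring
      have h3 : (n + 1) * t 1 = n * t 1 + t 1 := by ring
      omega
  -- identify t 0 = u and t k = v
  have ht0 : t 0 = u := by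
    have h0 : spow (gen b) (t 0) = spow (gen b) u := by
      rw [← ht2 0, ← hx]; norm_num
    exact (hfree b b _ _ (ht1 0) hu h0).2
  have htk : t k = v := by
    have hkj : i + k * q = j := by omega
    have h0 : spow (gen b) (t k) = spow (gen b) v := by
      rw [← ht2 k, ← hy, hkj]
    exact (hfree b b _ _ (ht1 k) hv h0).2
  -- q_b divides dist u (t 1)
  have hrho1 : rho gen (spow (gen b) u) (spow (gen b) (t 1)) := by
    have := rho_mul_right gen (hrhom 1) z
    rwa [hx, ht2 1] at this
  have hqbdvd : qa b ∣ Nat.dist u (t 1) := by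
    rcases (hchar b u (t 1) hu (ht1 1)).mp hrho1 with heq | ⟨_, _, hm⟩
    · rw [heq, Nat.dist_self]; exact dvd_zero _
    · exact dvd_dist_of_mod hm
  -- dist u v = k * dist u (t 1)
  have hlink : v + k * u = u + k * t 1 := by
    have := hlin k
    rw [ht0, htk] at this
    omega
  have hdist : Nat.dist u v = k * Nat.dist u (t 1) := by
    rcases le_total u (t 1) with hle | hle
    · have e1 : k * t 1 = k * u + k * (t 1 - u) := by
        rw [← Nat.mul_add]; congr 1; omega
      have e2 : v = u + k * (t 1 - u) := by omega
      rw [Nat.dist_eq_sub_of_le hle, Nat.dist_eq_sub_of_le (by omega : u ≤ v)]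
      omega
    · have e1 : k * u = k * t 1 + k * (u - t 1) := by
        rw [← Nat.mul_add]; congr 1; omega
      have e2 : v + k * (u - t 1) = u := by omega
      rw [Nat.dist_comm u (t 1), Nat.dist_eq_sub_of_le hle,
          Nat.dist_comm u v, Nat.dist_eq_sub_of_le (by omega : v ≤ u)]
      omega
  -- dist i j / q = k
  have hdij : Nat.dist i j / q = k := by
    rw [Nat.dist_eq_sub_of_le hij.le, hk', Nat.mul_div_cancel _ (by omega : 0 < q)]
  obtain ⟨s, hs⟩ := hqbdvd
  have hqb1 : 0 < qa b := hqa b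
  have : Nat.dist u v / qa b = k * s := by
    rw [hdist, hs, Nat.mul_comm (qa b) s, ← Nat.mul_assoc, Nat.mul_div_cancel _ hqb1]
  rw [hdij, this]
  exact Dvd.intro s rfl

theorem stmt15 {S : Type*} [Semigroup S] {A : Type*} [Finite A] (gen : A → S)
    (hcover : ∀ x : S, ∃ a : A, x ∈ Nblock (gen a))
    (hfree : ∀ (a b : A) (i j : ℕ), 1 ≤ i → 1 ≤ j →
      spow (gen a) i = spow (gen b) j → a = b ∧ i = j)
    (pa qa : A → ℕ) (hpa : ∀ a, 1 ≤ pa a) (hqa : ∀ a, 1 ≤ qa a)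
    (hchar : ∀ (a : A) (i j : ℕ), 1 ≤ i → 1 ≤ j →
      (rho gen (spow (gen a) i) (spow (gen a) j) ↔
        i = j ∨ (pa a ≤ i ∧ pa a ≤ j ∧ i % qa a = j % qa a))) :
    ∀ (a b : A) (i j u v : ℕ) (z : S), 1 ≤ i → 1 ≤ j → 1 ≤ u → 1 ≤ v →
      rho gen (spow (gen a) i) (spow (gen a) j) → i ≠ j →
      spow (gen a) i * z = spow (gen b) u →
      spow (gen a) j * z = spow (gen b) v →
      (Nat.dist i j / qa a) ∣ (Nat.dist u v / qa b) := by
  intro a b i j u v z hi hj hu hv hrho hne hx hy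
  have hsymm : rho gen (spow (gen a) j) (spow (gen a) i) := by
    intro w; obtain ⟨c, h1, h2⟩ := hrho w; exact ⟨c, h2, h1⟩
  rcases Nat.lt_or_ge i j with hlt | hge
  · exact stmt15_aux gen hfree pa qa hpa hqa hchar a b i j u v z hi hj hu hv hrho hlt hx hy
  · have hlt : j < i := by omega
    have := stmt15_aux gen hfree pa qa hpa hqa hchar a b j i v u z hj hi hv hu hsymm hlt hy hx
    rwa [Nat.dist_comm j i, Nat.dist_comm v u] at this
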